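/- With E, L(f), E(f) as defined, and assuming all the displayed integrals are finite, one has |∫ f dρ − ∫ f dγ − L(f)| ≤ |E|·|L(f)| + |E(f)|. -/

import Mathlib

open MeasureTheory Real Set
open scoped Classical
open scoped ENNReal NNReal

noncomputable section

abbrev Euc (d : ℕ) := EuclideanSpace ℝ (Fin d)

/-- Symmetric PSD square root of a matrix (zero if not PSD). -/
def matSqrt {d : ℕ} (M : Matrix (Fin d) (Fin d) ℝ) : Matrix (Fin d) (Fin d) ℝ :=
  if h : M.PosSemidef then
    (h.1.eigenvectorUnitary : Matrix (Fin d) (Fin d) ℝ) *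
      Matrix.diagonal (fun i => Real.sqrt (h.1.eigenvalues i)) *
      (star h.1.eigenvectorUnitary : Matrix (Fin d) (Fin d) ℝ)
  else 0

/-- Operator norm of a matrix acting on Euclidean space. -/
def matOpNorm {d : ℕ} (M : Matrix (Fin d) (Fin d) ℝ) : ℝ :=
  ‖LinearMap.toContinuousLinearMap (Matrix.toEuclideanLin M)‖

/-- `H`-weighted norm `√(xᵀ H x)`. -/
def normH {d : ℕ} (H : Matrix (Fin d) (Fin d) ℝ) (x : Euc d) : ℝ :=
  Real.sqrt (inner ℝ x (Matrix.toEuclideanLin H x) : ℝ)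

/-- Standard Gaussian measure on `ℝ^d`. -/
def stdGaussian (d : ℕ) : Measure (Euc d) :=
  volume.withDensity fun x => ENNReal.ofReal ((2 * π) ^ (-(d : ℝ) / 2) * Real.exp (-‖x‖ ^ 2 / 2))

lemma stdGaussian_prob (d : ℕ) : IsProbabilityMeasure (stdGaussian d) := by
  constructor
  have hint : Integrable (fun x : Euc d => Real.exp (-(1/2 : ℝ) * ‖x‖ ^ 2)) volume := by
    have h := (GaussianFourier.integrable_cexp_neg_mul_sq_norm_add
      (b := (1/2 : ℂ)) (by norm_num) 0 (0 : Euc d)).norm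
    simpa [Complex.norm_exp, ← Complex.ofReal_pow] using h
  have hint2 : Integrable (fun x : Euc d => (2 * π) ^ (-(d : ℝ) / 2) * Real.exp (-‖x‖ ^ 2 / 2))
      volume := by
    have := hint.const_mul ((2 * π) ^ (-(d : ℝ) / 2))
    convert this using 2 with x
    ring_nf
  have hI : ∫ x : Euc d, Real.exp (-(1/2 : ℝ) * ‖x‖ ^ 2) = (2 * π) ^ ((d : ℝ) / 2) := by
    rw [GaussianFourier.integral_rexp_neg_mul_sq_norm (by norm_num : (0:ℝ) < 1/2)]
    norm_num [finrank_euclideanSpace]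
    congr 1
    ring
  rw [stdGaussian, withDensity_apply _ MeasurableSet.univ, setLIntegral_univ,
    ← ofReal_integral_eq_lintegral_ofReal hint2]
  · rw [integral_const_mul]
    have : ∫ x : Euc d, Real.exp (-‖x‖ ^ 2 / 2) = (2 * π) ^ ((d : ℝ) / 2) := by
      rw [← hI]; congr 1 with x; ring_nf
    rw [this, ← Real.rpow_add (by positivity)]
    norm_num [neg_div]
  · filter_upwards with x
    positivity

/-- Gaussian measure `N(m, S)`, defined as the pushforward of the standard Gaussian
by `z ↦ m + S^{1/2} z`. -/
def gaussN {d : ℕ} (m : Euc d) (S : Matrix (Fin d) (Fin d) ℝ) : Measure (Euc d) :=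
  (stdGaussian d).map fun z => m + Matrix.toEuclideanLin (matSqrt S) z

/-- Normalization of a measure to a probability measure. -/
def normalized {α : Type*} [MeasurableSpace α] (μ : Measure α) : Measure α :=
  (μ Set.univ)⁻¹ • μ

/-- Posterior measure `π ∝ e^{-n v}` on `ℝ^d`. -/
def post (d n : ℕ) (v : Euc d → ℝ) : Measure (Euc d) :=
  normalized (volume.withDensity fun x => ENNReal.ofReal (Real.exp (-(n : ℝ) * v x)))

/-- Hessian matrix of `f` at `x`. -/
def hess {d : ℕ} (f : Euc d → ℝ) (x : Euc d) : Matrix (Fin d) (Fin d) ℝ :=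
  fun i j => iteratedFDeriv ℝ 2 f x ![EuclideanSpace.single i 1, EuclideanSpace.single j 1]

/-- Assumption 1: `mstar` is the unique global minimizer of `v` and the Hessian there
is positive definite. -/
def Assumption1 {d : ℕ} (v : Euc d → ℝ) (mstar : Euc d) : Prop :=
  (∀ x, x ≠ mstar → v mstar < v x) ∧ (hess v mstar).PosDef

/-- Assumption 2: polynomial growth of the `H_v`-weighted third and fourth derivatives,
plus the smallness condition `a₃ d/√n + a₄ d²/n ≤ 1`. -/
def Assumption2 {d : ℕ} (n : ℕ) (v : Euc d → ℝ) (mstar : Euc d) (q a₃ a₄ : ℝ) : Prop :=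
  (∀ k ∈ ({3, 4} : Set ℕ), ∀ x u : Euc d, normH (hess v mstar) u = 1 →
    iteratedFDeriv ℝ k v x (fun _ => u) ≤ (if k = 3 then a₃ else a₄) *
      (max 1 (Real.sqrt ((n : ℝ) / d) * normH (hess v mstar) (x - mstar))) ^ q) ∧
  a₃ * d / Real.sqrt n + a₄ * d ^ 2 / n ≤ 1

/-- Assumption 3: linear growth of `v` away from the minimizer. -/
def Assumption3 {d : ℕ} (n : ℕ) (v : Euc d → ℝ) (mstar : Euc d) (c₀ : ℝ) : Prop :=
  ∀ x : Euc d, (1 / 2) * Real.sqrt ((d : ℝ) / n) ≤ normH (hess v mstar) (x - mstar) →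
    c₀ * Real.sqrt ((d : ℝ) / n) * normH (hess v mstar) (x - mstar) ≤ v x - v mstar

/-- Membership in the region `R_V`. -/
def inRV {d : ℕ} (n : ℕ) (v : Euc d → ℝ) (mstar : Euc d)
    (m : Euc d) (S : Matrix (Fin d) (Fin d) ℝ) : Prop :=
  S.PosDef ∧ ((2 : ℝ) • ((n : ℝ) • hess v mstar)⁻¹ - S).PosSemidef ∧
    matOpNorm (matSqrt ((n : ℝ) • hess v mstar) * matSqrt S) ^ 2
      + ‖Matrix.toEuclideanLin (matSqrt ((n : ℝ) • hess v mstar)) (m - mstar)‖ ^ 2 ≤ 8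

/-- First-order optimality equations for Gaussian VI:
`E[∇V(m + S^{1/2}Z)] = 0` and `E[∇²V(m + S^{1/2}Z)] = S⁻¹`, with `V = n v`. -/
def optEqs {d : ℕ} (n : ℕ) (v : Euc d → ℝ) (m : Euc d) (S : Matrix (Fin d) (Fin d) ℝ) : Prop :=
  (∫ z, gradient (fun x => (n : ℝ) * v x) (m + Matrix.toEuclideanLin (matSqrt S) z)
      ∂(stdGaussian d)) = 0 ∧
  ∀ i j, (∫ z, hess (fun x => (n : ℝ) * v x) (m + Matrix.toEuclideanLin (matSqrt S) z) i j
      ∂(stdGaussian d)) = S⁻¹ i j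

/-- Condition (G) on the test function `g`. -/
def condG {d : ℕ} (c₀ Rg : ℝ) (mhat : Euc d) (Shat : Matrix (Fin d) (Fin d) ℝ)
    (g : Euc d → ℝ) : Prop :=
  ∀ x : Euc d, Rg * Real.sqrt d ≤ normH Shat⁻¹ (x - mhat) →
    |g x - ∫ y, g y ∂(gaussN mhat Shat)| ≤
      Real.exp (c₀ * Real.sqrt d * normH Shat⁻¹ (x - mhat) / 4)

/-- Variance of `g` under `μ`. -/
def varG {d : ℕ} (μ : Measure (Euc d)) (g : Euc d → ℝ) : ℝ :=
  ∫ x, (g x - ∫ y, g y ∂μ) ^ 2 ∂μ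

/-- **Decomposition lemma** (Lemma 4.2): with `ρ ∝ e^{-r₃} γ`, `E`, `L(f)`, `E(f)` as in
Definition 4.1, one has `|∫ f dρ − ∫ f dγ − L(f)| ≤ |E|·|L(f)| + |E(f)|`. -/
theorem decomposition_lemma
    (d : ℕ) (r₃ f : Euc d → ℝ)
    (hmeas : Measurable r₃)
    (hr₃_int : Integrable r₃ (stdGaussian d))
    (hr₃_mean : (∫ x, r₃ x ∂(stdGaussian d)) = 0)
    (hexp_int : Integrable (fun x => Real.exp (-r₃ x)) (stdGaussian d))
    (hexp_pos : 0 < ∫ x, Real.exp (-r₃ x) ∂(stdGaussian d))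
    (ρ : Measure (Euc d))
    (hρ : ρ = (ENNReal.ofReal (∫ x, Real.exp (-r₃ x) ∂(stdGaussian d)))⁻¹ •
      ((stdGaussian d).withDensity fun x => ENNReal.ofReal (Real.exp (-r₃ x))))
    (hf_ρ : Integrable f ρ) (hf_γ : Integrable f (stdGaussian d))
    (hL_int : Integrable
      (fun x => (f x - ∫ y, f y ∂(stdGaussian d)) * (-r₃ x + r₃ x ^ 2 / 2)) (stdGaussian d))
    (hEf_int : Integrable
      (fun x => (f x - ∫ y, f y ∂(stdGaussian d)) *
        (Real.exp (-r₃ x) - 1 + r₃ x - r₃ x ^ 2 / 2)) (stdGaussian d)) :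
    |(∫ x, f x ∂ρ) - (∫ x, f x ∂(stdGaussian d)) -
        ∫ x, (f x - ∫ y, f y ∂(stdGaussian d)) * (-r₃ x + r₃ x ^ 2 / 2) ∂(stdGaussian d)| ≤
      |∫ x, (Real.exp (-r₃ x) - 1 + r₃ x) ∂(stdGaussian d)| *
        |∫ x, (f x - ∫ y, f y ∂(stdGaussian d)) * (-r₃ x + r₃ x ^ 2 / 2) ∂(stdGaussian d)| +
      |∫ x, (f x - ∫ y, f y ∂(stdGaussian d)) *
          (Real.exp (-r₃ x) - 1 + r₃ x - r₃ x ^ 2 / 2) ∂(stdGaussian d)| := by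
  have : IsProbabilityMeasure (stdGaussian d) := stdGaussian_prob d
  set γ := stdGaussian d
  set Z : ℝ := ∫ x, Real.exp (-r₃ x) ∂γ with hZ
  set c : ℝ := ∫ y, f y ∂γ with hc
  set L : ℝ := ∫ x, (f x - c) * (-r₃ x + r₃ x ^ 2 / 2) ∂γ with hL
  set Ef : ℝ := ∫ x, (f x - c) * (Real.exp (-r₃ x) - 1 + r₃ x - r₃ x ^ 2 / 2) ∂γ with hEf
  have h1r : Integrable (fun x => (1:ℝ) - r₃ x) γ := (integrable_const 1).sub hr₃_int
  have he1 : Integrable (fun x => Real.exp (-r₃ x) - 1) γ := hexp_int.sub (integrable_const 1)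
  have hfc : Integrable (fun x => f x - c) γ := hf_γ.sub (integrable_const c)
  -- Z ≥ 1
  have hZ1 : 1 ≤ Z := by
    have hmono : ∫ x, ((1:ℝ) - r₃ x) ∂γ ≤ Z := by
      apply integral_mono h1r hexp_int
      intro x
      have := Real.add_one_le_exp (-r₃ x)
      simp only [Pi.sub_apply] at *
      linarith
    rwa [integral_sub (integrable_const 1) hr₃_int, hr₃_mean, integral_const,
      probReal_univ, one_smul, sub_zero] at hmono
  have hZpos : (0:ℝ) < Z := lt_of_lt_of_le one_pos hZ1
  -- E = Z - 1
  have hE : ∫ x, (Real.exp (-r₃ x) - 1 + r₃ x) ∂γ = Z - 1 := by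
    rw [integral_add he1 hr₃_int, integral_sub hexp_int (integrable_const 1), hr₃_mean,
      integral_const, probReal_univ, one_smul, add_zero]
  -- ∫ f dρ = Z⁻¹ * ∫ exp(-r₃) * f dγ
  have hfρ : ∫ x, f x ∂ρ = Z⁻¹ * ∫ x, Real.exp (-r₃ x) * f x ∂γ := by
    rw [hρ, integral_smul_measure]
    have hd : (fun x => ENNReal.ofReal (Real.exp (-r₃ x)))
        = fun x => (((Real.exp (-r₃ x)).toNNReal : ℝ≥0) : ℝ≥0∞) := rfl
    rw [hd, integral_withDensity_eq_integral_smul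
      (by measurability : Measurable fun x => (Real.exp (-r₃ x)).toNNReal)]
    rw [ENNReal.toReal_inv, ENNReal.toReal_ofReal hZpos.le, smul_eq_mul]
    congr 1
    apply integral_congr_ae
    filter_upwards with x
    simp [NNReal.smul_def, Real.coe_toNNReal _ (Real.exp_nonneg _)]
  have hfc0 : ∫ x, (f x - c) ∂γ = 0 := by
    rw [integral_sub hf_γ (integrable_const c), integral_const, probReal_univ,
      one_smul, sub_self]
  have hdecomp : ∫ x, Real.exp (-r₃ x) * f x ∂γ = L + Ef + c * Z := by
    have hpt : (fun x => Real.exp (-r₃ x) * f x) =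
        fun x => ((f x - c) * (-r₃ x + r₃ x ^ 2 / 2)
          + (f x - c) * (Real.exp (-r₃ x) - 1 + r₃ x - r₃ x ^ 2 / 2))
          + ((f x - c) + c * Real.exp (-r₃ x)) := by
      funext x; ring
    have hA : Integrable (fun x => (f x - c) * (-r₃ x + r₃ x ^ 2 / 2)
        + (f x - c) * (Real.exp (-r₃ x) - 1 + r₃ x - r₃ x ^ 2 / 2)) γ := hL_int.add hEf_int
    have hB : Integrable (fun x => (f x - c) + c * Real.exp (-r₃ x)) γ :=
      hfc.add (hexp_int.const_mul c)
    have hcE : Integrable (fun x => c * Real.exp (-r₃ x)) γ := hexp_int.const_mul c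
    rw [hpt, integral_add hA hB, integral_add hL_int hEf_int, integral_add hfc hcE,
      hfc0, integral_const_mul, zero_add]
  rw [hfρ, hdecomp, hE]
  have key : Z⁻¹ * (L + Ef + c * Z) - c - L = Z⁻¹ * (Ef - L * (Z - 1)) := by
    field_simp
    ring
  rw [key, abs_mul, abs_inv, abs_of_pos hZpos]
  have hzi : Z⁻¹ ≤ 1 := by
    have := inv_anti₀ one_pos hZ1
    simpa using this
  have h1 : Z⁻¹ * |Ef - L * (Z - 1)| ≤ |Ef - L * (Z - 1)| :=
    mul_le_of_le_one_left (abs_nonneg _) hzi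
  refine h1.trans ?_
  calc |Ef - L * (Z - 1)| ≤ |L * (Z - 1)| + |Ef| := by
        rw [sub_eq_add_neg]
        refine (abs_add_le _ _).trans ?_
        simp [abs_neg, add_comm]
      _ = |Z - 1| * |L| + |Ef| := by rw [abs_mul, mul_comm]


end
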